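/- Let n be a natural number, let a, b ∈ ℝⁿ with aᵢ < bᵢ for all i, and let Ω = [a₁,b₁] × ⋯ × [aₙ,bₙ] be the closed box. Let α, β be real numbers and let ψ : ℝ × ℝⁿ → ℝ be three times continuously differentiable. Assume that ψ satisfies the Westervelt equation ∂ₜₜψ − Δψ = α Δ(∂ₜψ) + β ∂ₜ((∂ₜψ)²) at every point of ℝ × Ω, and that the homogeneous Neumann condition holds: for every t, every index i, and every x ∈ Ω with xᵢ = aᵢ or xᵢ = bᵢ, the partial derivative ∂ψ/∂xᵢ(t,x) = 0. Then the function t ↦ E(t) = ∫_Ω ½ |∇ψ(t,x)|² + (½ − (2β/3) ∂ₜψ(t,x)) (∂ₜψ(t,x))² dx is differentiable with derivative E'(t) = −α ∫_Ω |∇(∂ₜψ)(t,x)|² dx, where ∇ denotes the gradient in the spatial variable x. -/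

import Mathlib

open MeasureTheory

/-- Partial derivative in time of a function `f : ℝ × ℝⁿ → ℝ`. -/
noncomputable def Dt {n : ℕ} (f : ℝ × (Fin n → ℝ) → ℝ) (u : ℝ × (Fin n → ℝ)) : ℝ :=
  deriv (fun s => f (s, u.2)) u.1

/-- Spatial partial derivative in the `i`-th coordinate direction of `f : ℝ × ℝⁿ → ℝ`. -/
noncomputable def Dxi {n : ℕ} (i : Fin n) (f : ℝ × (Fin n → ℝ) → ℝ)
    (u : ℝ × (Fin n → ℝ)) : ℝ :=
  deriv (fun s : ℝ => f (u.1, u.2 + s • (Pi.single i 1 : Fin n → ℝ))) 0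

/-!
Differentiating under the integral sign, the time derivative of the energy density is
`∇ψ · ∇ψₜ + (1 - 2βψₜ) ψₜ ψₜₜ`. Multiplying the Westervelt equation by `ψₜ` turns this into
`div F - α |∇ψₜ|²` for the flux `F = ψₜ (∇ψ + α ∇ψₜ)`. The Neumann condition `∂ᵢψ = 0` on the
faces `xᵢ ∈ {aᵢ, bᵢ}` holds at all times, so also `∂ₜ∂ᵢψ = 0` there; hence the normal component
`Fᵢ` vanishes on those faces and the divergence theorem on the box gives `∫ div F = 0`.
-/

open Set

theorem hasDerivAt_setIntegral_of_continuous {E : Type*} [TopologicalSpace E] [T2Space E]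
    [MeasurableSpace E] [OpensMeasurableSpace E] {μ : Measure E} [IsFiniteMeasureOnCompacts μ]
    {K : Set E} (hK : IsCompact K) {F F' : ℝ × E → ℝ} (hF : Continuous F)
    (hF' : Continuous F') (hderiv : ∀ s x, HasDerivAt (fun s => F (s, x)) (F' (s, x)) s)
    (t : ℝ) :
    HasDerivAt (fun s => ∫ x in K, F (s, x) ∂μ) (∫ x in K, F' (t, x) ∂μ) t := by
  have : IsFiniteMeasure (μ.restrict K) := isFiniteMeasure_restrict.2 hK.measure_lt_top.ne
  obtain ⟨C, hC⟩ := (isCompact_Icc (a := t - 1) (b := t + 1)).prod hK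
    |>.exists_bound_of_continuousOn hF'.continuousOn
  have hbound : ∀ᵐ x ∂μ.restrict K, ∀ s ∈ Metric.ball t 1, ‖F' (s, x)‖ ≤ C := by
    filter_upwards [ae_restrict_mem hK.measurableSet] with x hx s hs
    rw [Real.ball_eq_Ioo] at hs
    exact hC (s, x) ⟨Ioo_subset_Icc_self hs, hx⟩
  exact (hasDerivAt_integral_of_dominated_loc_of_deriv_le (Metric.ball_mem_nhds t one_pos)
    (.of_forall fun s => (hF.comp (.prodMk_right s)).aestronglyMeasurable)
    ((hF.comp (.prodMk_right t)).continuousOn.integrableOn_compact hK)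
    (hF'.comp (.prodMk_right t)).aestronglyMeasurable hbound
    (integrable_const C)
    (.of_forall fun x s _ => hderiv s x)).2

theorem integral_divergence_eq_zero_of_eq_zero_on_faces {n : ℕ} {a b : Fin n → ℝ} (hle : a ≤ b)
    (f : Fin n → (Fin n → ℝ) → ℝ) (hf : ∀ i, ContDiff ℝ 1 (f i))
    (hfaces : ∀ i, ∀ x ∈ Icc a b, (x i = a i ∨ x i = b i) → f i x = 0) :
    ∫ x in Icc a b, ∑ i, fderiv ℝ (f i) x (Pi.single i 1) = 0 := by
  cases n with
  | zero => simp
  | succ m =>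
    have hcont (i : Fin (m + 1)) : Continuous fun x => fderiv ℝ (f i) x (Pi.single i 1) :=
      ((hf i).continuous_fderiv one_ne_zero).clm_apply continuous_const
    rw [integral_divergence_of_hasFDerivAt_off_countable' a b hle f (fun i x => fderiv ℝ (f i) x) ∅
      countable_empty (fun i => (hf i).continuous.continuousOn)
      (fun x _ i => ((hf i).differentiable one_ne_zero x).hasFDerivAt)
      ((continuous_finsetSum _ fun i _ => hcont i).continuousOn.integrableOn_compact
        isCompact_Icc)]
    refine Finset.sum_eq_zero fun i _ => ?_
    have hface : ∀ c ∈ ({a i, b i} : Set ℝ),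
        ∫ x in Icc (a ∘ i.succAbove) (b ∘ i.succAbove), f i (i.insertNth c x) = 0 := by
      intro c hc
      refine setIntegral_eq_zero_of_forall_eq_zero fun x hx => hfaces i _ ?_ (by simpa using hc)
      refine Fin.insertNth_mem_Icc.2 ⟨?_, hx⟩
      rcases hc with rfl | rfl
      exacts [⟨le_rfl, hle i⟩, ⟨hle i, le_rfl⟩]
    rw [hface _ (.inr rfl), hface _ (.inl rfl), sub_zero]

namespace Westervelt

variable {n : ℕ}

/- Components of the Fréchet derivative. Unlike the slice derivatives `Dt` and `Dxi`, they come
with the product rule and, for `C²` functions, commute (`partialTime_partialSpace`); the two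
notions agree on differentiable functions. -/
noncomputable def partialTime (f : ℝ × (Fin n → ℝ) → ℝ) (u : ℝ × (Fin n → ℝ)) : ℝ :=
  fderiv ℝ f u (1, 0)

noncomputable def partialSpace (i : Fin n) (f : ℝ × (Fin n → ℝ) → ℝ)
    (u : ℝ × (Fin n → ℝ)) : ℝ :=
  fderiv ℝ f u (0, Pi.single i 1)

section PartialDerivatives

variable {f g : ℝ × (Fin n → ℝ) → ℝ}

theorem hasDerivAt_partialTime {t : ℝ} {x : Fin n → ℝ} (hf : DifferentiableAt ℝ f (t, x)) :
    HasDerivAt (fun s => f (s, x)) (partialTime f (t, x)) t :=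
  hf.hasFDerivAt.comp_hasDerivAt t ((hasDerivAt_id t).prodMk (hasDerivAt_const t x))

theorem Dt_eq_partialTime (hf : Differentiable ℝ f) : Dt f = partialTime f :=
  funext fun u => (hasDerivAt_partialTime (hf u)).deriv

theorem Dxi_eq_partialSpace (i : Fin n) (hf : Differentiable ℝ f) :
    Dxi i f = partialSpace i f := by
  ext u
  have hline : (fun s : ℝ => f (u.1, u.2 + s • (Pi.single i 1 : Fin n → ℝ)))
      = fun s => f (u + s • ((0 : ℝ), (Pi.single i 1 : Fin n → ℝ))) := by
    ext s; congr 1; ext <;> simp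
  rw [Dxi, hline]
  exact ((hf u).hasFDerivAt.hasLineDerivAt _).deriv

theorem Dt_sq {u : ℝ × (Fin n → ℝ)} (hf : DifferentiableAt ℝ f u) :
    Dt (fun v => f v ^ 2) u = 2 * f u * partialTime f u := by
  rw [Dt, ((hasDerivAt_partialTime (t := u.1) (x := u.2) hf).fun_pow 2).deriv]
  ring

theorem partialTime_eq_zero_of_slice_eq_zero {t : ℝ} {x : Fin n → ℝ}
    (hf : DifferentiableAt ℝ f (t, x)) (hzero : ∀ s, f (s, x) = 0) : partialTime f (t, x) = 0 := by
  simpa [hzero] using (hasDerivAt_partialTime hf).deriv.symm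

theorem contDiff_partialTime {k : WithTop ℕ∞} (hf : ContDiff ℝ (k + 1) f) :
    ContDiff ℝ k (partialTime f) :=
  (hf.fderiv_right le_rfl).clm_apply contDiff_const

theorem contDiff_partialSpace {k : WithTop ℕ∞} (i : Fin n) (hf : ContDiff ℝ (k + 1) f) :
    ContDiff ℝ k (partialSpace i f) :=
  (hf.fderiv_right le_rfl).clm_apply contDiff_const

theorem partialTime_partialSpace (i : Fin n) (hf : ContDiff ℝ 2 f) (u : ℝ × (Fin n → ℝ)) :
    partialTime (partialSpace i f) u = partialSpace i (partialTime f) u := by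
  have hd : DifferentiableAt ℝ (fderiv ℝ f) u :=
    (hf.fderiv_right (m := 1) le_rfl).differentiable one_ne_zero u
  have hcomp (v w : ℝ × (Fin n → ℝ)) :
      fderiv ℝ (fun y => fderiv ℝ f y w) u v = fderiv ℝ (fderiv ℝ f) u v w := by
    rw [fderiv_clm_apply hd (differentiableAt_const w)]
    simp
  exact (hcomp _ _).trans
    ((hf.contDiffAt.isSymmSndFDerivAt (by simp) _ _).trans (hcomp _ _).symm)

theorem partialSpace_mul (i : Fin n) {u : ℝ × (Fin n → ℝ)} (hf : DifferentiableAt ℝ f u)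
    (hg : DifferentiableAt ℝ g u) :
    partialSpace i (fun v => f v * g v) u
      = partialSpace i f u * g u + f u * partialSpace i g u := by
  simp only [partialSpace, fderiv_fun_mul hf hg]
  simp only [add_apply, smul_apply, smul_eq_mul]
  ring

theorem partialSpace_add_const_mul (i : Fin n) (c : ℝ) {u : ℝ × (Fin n → ℝ)}
    (hf : DifferentiableAt ℝ f u) (hg : DifferentiableAt ℝ g u) :
    partialSpace i (fun v => f v + c * g v) u = partialSpace i f u + c * partialSpace i g u := by
  simp [partialSpace, fderiv_fun_add hf (hg.const_mul c), fderiv_const_mul hg]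

theorem fderiv_slice_apply_single (i : Fin n) {t : ℝ} {x : Fin n → ℝ}
    (hf : DifferentiableAt ℝ f (t, x)) :
    fderiv ℝ (fun y => f (t, y)) x (Pi.single i 1) = partialSpace i f (t, x) := by
  change fderiv ℝ (f ∘ Prod.mk t) x _ = _
  rw [(hf.hasFDerivAt.comp x (hasFDerivAt_prodMk_right t x)).fderiv]
  simp [partialSpace]

end PartialDerivatives

section Energy

variable (α β : ℝ) {ψ : ℝ × (Fin n → ℝ) → ℝ}

noncomputable def energyDensity (ψ : ℝ × (Fin n → ℝ) → ℝ) (u : ℝ × (Fin n → ℝ)) : ℝ :=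
  1 / 2 * ∑ i, partialSpace i ψ u ^ 2
    + (1 / 2 - 2 * β / 3 * partialTime ψ u) * partialTime ψ u ^ 2

noncomputable def energyDensityRate (ψ : ℝ × (Fin n → ℝ) → ℝ) (u : ℝ × (Fin n → ℝ)) : ℝ :=
  ∑ i, partialSpace i ψ u * partialSpace i (partialTime ψ) u
    + (1 - 2 * β * partialTime ψ u) * partialTime ψ u * partialTime (partialTime ψ) u

def SolvesWesterveltAt (ψ : ℝ × (Fin n → ℝ) → ℝ) (u : ℝ × (Fin n → ℝ)) : Prop :=
  partialTime (partialTime ψ) u - ∑ i, partialSpace i (partialSpace i ψ) u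
    = α * ∑ i, partialSpace i (partialSpace i (partialTime ψ)) u
      + β * (2 * partialTime ψ u * partialTime (partialTime ψ) u)

noncomputable def energyFlux (ψ : ℝ × (Fin n → ℝ) → ℝ) (i : Fin n) (u : ℝ × (Fin n → ℝ)) : ℝ :=
  partialTime ψ u * (partialSpace i ψ u + α * partialSpace i (partialTime ψ) u)

theorem continuous_energyDensity (hψ : ContDiff ℝ 1 ψ) : Continuous (energyDensity β ψ) := by
  have := (contDiff_partialTime (k := 0) hψ).continuous
  have := fun i => (contDiff_partialSpace (k := 0) i hψ).continuous
  unfold energyDensity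
  fun_prop

theorem continuous_energyDensityRate (hψ : ContDiff ℝ 2 ψ) :
    Continuous (energyDensityRate β ψ) := by
  have hψt : ContDiff ℝ 1 (partialTime ψ) := contDiff_partialTime hψ
  have := (contDiff_partialTime (k := 0) hψt).continuous
  have := fun i => (contDiff_partialSpace (k := 0) i hψt).continuous
  have := hψt.continuous
  have := fun i => (contDiff_partialSpace (k := 1) i hψ).continuous
  unfold energyDensityRate
  fun_prop

theorem hasDerivAt_energyDensity (hψ : ContDiff ℝ 2 ψ) (s : ℝ) (x : Fin n → ℝ) :
    HasDerivAt (fun s => energyDensity β ψ (s, x)) (energyDensityRate β ψ (s, x)) s := by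
  have hψt : HasDerivAt (fun s => partialTime ψ (s, x)) (partialTime (partialTime ψ) (s, x)) s :=
    hasDerivAt_partialTime ((contDiff_partialTime (k := 1) hψ).differentiable one_ne_zero _)
  have hψx (i : Fin n) :
      HasDerivAt (fun s => partialSpace i ψ (s, x)) (partialSpace i (partialTime ψ) (s, x)) s := by
    rw [← partialTime_partialSpace i hψ]
    exact hasDerivAt_partialTime
      ((contDiff_partialSpace (k := 1) i hψ).differentiable one_ne_zero _)
  refine (((HasDerivAt.fun_sum (u := .univ) fun i _ => (hψx i).fun_pow 2).const_mul (1 / 2)).fun_add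
    (((hψt.const_mul (2 * β / 3)).const_sub (1 / 2)).fun_mul (hψt.fun_pow 2))).congr_deriv ?_
  simp only [energyDensityRate, Finset.mul_sum]
  congr 1
  · exact Finset.sum_congr rfl fun i _ => by ring
  · ring

theorem contDiff_energyFlux (hψ : ContDiff ℝ 3 ψ) (i : Fin n) :
    ContDiff ℝ 1 (energyFlux α ψ i) := by
  have hψt : ContDiff ℝ 2 (partialTime ψ) := contDiff_partialTime hψ
  have hψx : ContDiff ℝ 2 (partialSpace i ψ) := contDiff_partialSpace i hψ
  exact (hψt.of_le one_le_two).mul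
    ((hψx.of_le one_le_two).add (contDiff_const.mul (contDiff_partialSpace i hψt)))

theorem energyFlux_eq_zero (hψ : ContDiff ℝ 2 ψ) {i : Fin n} {t : ℝ} {x : Fin n → ℝ}
    (hzero : ∀ s, partialSpace i ψ (s, x) = 0) : energyFlux α ψ i (t, x) = 0 := by
  have hψti : partialSpace i (partialTime ψ) (t, x) = 0 := by
    rw [← partialTime_partialSpace i hψ]
    exact partialTime_eq_zero_of_slice_eq_zero
      ((contDiff_partialSpace (k := 1) i hψ).differentiable one_ne_zero _) hzero
  simp [energyFlux, hzero, hψti]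

theorem energyDensityRate_eq (hψ : ContDiff ℝ 3 ψ) {u : ℝ × (Fin n → ℝ)}
    (hpde : SolvesWesterveltAt α β ψ u) :
    energyDensityRate β ψ u
      = ∑ i, partialSpace i (energyFlux α ψ i) u
        - α * ∑ i, partialSpace i (partialTime ψ) u ^ 2 := by
  have hψt : ContDiff ℝ 2 (partialTime ψ) := contDiff_partialTime hψ
  have hdiff (i : Fin n) : partialSpace i (energyFlux α ψ i) u
      = partialSpace i (partialTime ψ) u
          * (partialSpace i ψ u + α * partialSpace i (partialTime ψ) u)
        + partialTime ψ u * (partialSpace i (partialSpace i ψ) u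
          + α * partialSpace i (partialSpace i (partialTime ψ)) u) := by
    have hdψx := (contDiff_partialSpace (k := 2) i hψ).differentiable two_ne_zero u
    have hdψtx := (contDiff_partialSpace (k := 1) i hψt).differentiable one_ne_zero u
    unfold energyFlux
    rw [partialSpace_mul i (hψt.differentiable two_ne_zero u) (hdψx.fun_add (hdψtx.const_mul α)),
      partialSpace_add_const_mul i α hdψx hdψtx]
  have hdiv : ∑ i, partialSpace i (energyFlux α ψ i) u
      = ∑ i, partialSpace i ψ u * partialSpace i (partialTime ψ) u
        + α * ∑ i, partialSpace i (partialTime ψ) u ^ 2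
        + partialTime ψ u * (∑ i, partialSpace i (partialSpace i ψ) u
          + α * ∑ i, partialSpace i (partialSpace i (partialTime ψ)) u) := by
    simp only [hdiff, Finset.mul_sum, ← Finset.sum_add_distrib]
    exact Finset.sum_congr rfl fun i _ => by ring
  rw [SolvesWesterveltAt] at hpde
  rw [energyDensityRate, hdiv]
  linear_combination partialTime ψ u * hpde

theorem integral_energyDensityRate_eq (hψ : ContDiff ℝ 3 ψ) {a b : Fin n → ℝ} (hle : a ≤ b)
    (t : ℝ)
    (hpde : ∀ x ∈ Icc a b, SolvesWesterveltAt α β ψ (t, x))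
    (hbc : ∀ (s : ℝ) (i : Fin n), ∀ x ∈ Icc a b,
      (x i = a i ∨ x i = b i) → partialSpace i ψ (s, x) = 0) :
    ∫ x in Icc a b, energyDensityRate β ψ (t, x)
      = -α * ∫ x in Icc a b, ∑ i, partialSpace i (partialTime ψ) (t, x) ^ 2 := by
  have hflux (i : Fin n) := contDiff_energyFlux α hψ i
  have hdiv : ∫ x in Icc a b, ∑ i, partialSpace i (energyFlux α ψ i) (t, x) = 0 := by
    rw [← integral_divergence_eq_zero_of_eq_zero_on_faces hle
      (fun i y => energyFlux α ψ i (t, y))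
      (fun i => (hflux i).comp (contDiff_const.prodMk contDiff_id))
      (fun i x hx hface => energyFlux_eq_zero α (hψ.of_le (by norm_num))
        fun s => hbc s i x hx hface)]
    exact setIntegral_congr_fun measurableSet_Icc fun x _ => Finset.sum_congr rfl fun i _ =>
      (fderiv_slice_apply_single i ((hflux i).differentiable one_ne_zero _)).symm
  have hψt : ContDiff ℝ 2 (partialTime ψ) := contDiff_partialTime hψ
  have hcont_div : Continuous fun x => ∑ i, partialSpace i (energyFlux α ψ i) (t, x) :=
    continuous_finsetSum _ fun i _ =>
      (contDiff_partialSpace (k := 0) i (hflux i)).continuous.comp (.prodMk_right t)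
  have hcont_sq : Continuous fun x => α * ∑ i, partialSpace i (partialTime ψ) (t, x) ^ 2 :=
    continuous_const.mul (continuous_finsetSum _ fun i _ =>
      ((contDiff_partialSpace (k := 1) i hψt).continuous.comp (.prodMk_right t)).pow 2)
  rw [setIntegral_congr_fun measurableSet_Icc fun x hx => energyDensityRate_eq α β hψ (hpde x hx),
    integral_sub (hcont_div.continuousOn.integrableOn_compact isCompact_Icc)
      (hcont_sq.continuousOn.integrableOn_compact isCompact_Icc),
    hdiv, integral_const_mul, zero_sub, neg_mul]

end Energy

theorem partial_form_of_westervelt {α β : ℝ} {ψ : ℝ × (Fin n → ℝ) → ℝ} (hψ : ContDiff ℝ 3 ψ)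
    {u : ℝ × (Fin n → ℝ)}
    (hwest : Dt (Dt ψ) u - ∑ i, Dxi i (Dxi i ψ) u
      = α * ∑ i, Dxi i (Dxi i (Dt ψ)) u + β * Dt (fun v => Dt ψ v ^ 2) u) :
    SolvesWesterveltAt α β ψ u := by
  have hψt : ContDiff ℝ 2 (partialTime ψ) := contDiff_partialTime hψ
  have hψx (i : Fin n) : ContDiff ℝ 2 (partialSpace i ψ) := contDiff_partialSpace i hψ
  have hψtx (i : Fin n) : ContDiff ℝ 1 (partialSpace i (partialTime ψ)) :=
    contDiff_partialSpace i hψt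
  simpa only [Dt_eq_partialTime (hψ.differentiable (by norm_num)),
    Dt_eq_partialTime (hψt.differentiable two_ne_zero),
    Dxi_eq_partialSpace _ (hψ.differentiable (by norm_num)),
    Dxi_eq_partialSpace _ (hψt.differentiable two_ne_zero),
    fun i => Dxi_eq_partialSpace i ((hψx i).differentiable two_ne_zero),
    fun i => Dxi_eq_partialSpace i ((hψtx i).differentiable one_ne_zero),
    Dt_sq ((hψt.differentiable two_ne_zero) u), SolvesWesterveltAt] using hwest

end Westervelt

open Westervelt

/-- Energy identity (1.4) of the paper for classical solutions of the Westervelt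
equation on a box `Ω = [a₁,b₁] × ⋯ × [aₙ,bₙ]` with homogeneous Neumann boundary
conditions: `d/dt ∫_Ω ½|∇ψ|² + (½ − (2β/3)∂ₜψ)(∂ₜψ)² dx = −α ∫_Ω |∇∂ₜψ|² dx`. -/
theorem westervelt_energy_identity_box (n : ℕ) (a b : Fin n → ℝ)
    (hab : ∀ i, a i < b i) (α β : ℝ)
    (ψ : ℝ × (Fin n → ℝ) → ℝ) (hψ : ContDiff ℝ 3 ψ)
    (hwest : ∀ (t : ℝ), ∀ x ∈ Set.Icc a b,
      Dt (Dt ψ) (t, x) - (∑ i, Dxi i (Dxi i ψ) (t, x))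
        = α * (∑ i, Dxi i (Dxi i (Dt ψ)) (t, x))
          + β * Dt (fun u => (Dt ψ u) ^ 2) (t, x))
    (hbc : ∀ (t : ℝ) (i : Fin n), ∀ x ∈ Set.Icc a b,
      (x i = a i ∨ x i = b i) → Dxi i ψ (t, x) = 0) :
    ∀ t : ℝ, HasDerivAt (fun s : ℝ => ∫ x in Set.Icc a b,
        ((1 / 2) * ∑ i, (Dxi i ψ (s, x)) ^ 2)
          + (1 / 2 - (2 * β / 3) * Dt ψ (s, x)) * (Dt ψ (s, x)) ^ 2)
      (-α * ∫ x in Set.Icc a b, ∑ i, (Dxi i (Dt ψ) (t, x)) ^ 2) t := by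
  intro t
  have hψ2 : ContDiff ℝ 2 ψ := hψ.of_le (by norm_num)
  have hψ1 : Differentiable ℝ ψ := hψ.differentiable (by norm_num)
  have hψt : Differentiable ℝ (partialTime ψ) :=
    (contDiff_partialTime (k := 2) hψ).differentiable two_ne_zero
  simp only [Dt_eq_partialTime hψ1, Dxi_eq_partialSpace _ hψ1, Dxi_eq_partialSpace _ hψt] at hbc ⊢
  have hderiv := hasDerivAt_setIntegral_of_continuous (μ := volume) (K := Set.Icc a b) isCompact_Icc
    (continuous_energyDensity β (hψ2.of_le one_le_two)) (continuous_energyDensityRate β hψ2)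
    (hasDerivAt_energyDensity β hψ2) t
  rw [integral_energyDensityRate_eq α β hψ (fun i => (hab i).le) t
    (fun x hx => partial_form_of_westervelt hψ (hwest t x hx)) hbc] at hderiv
  exact hderiv
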